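/- Let θ and θ' be congruences on the Płonka sum A of a semilattice direct system of groups. Then θ = θ' if and only if S_θ = S_{θ'} and θ_{ii} = θ'_{ii} for every i ∈ I. In other words, a congruence of a Płonka sum is uniquely determined by its index set S_θ together with its pure fibers. -/

import Mathlib

/-! Płonka sum of a semilattice direct system of groups.

`I` is a join-semilattice, `G i` are groups, and `p i j h : G i →* G j` (for `h : i ≤ j`)
are the transition homomorphisms. The Płonka sum is the sigma type `Σ i, G i` with
multiplication `⟨i,a⟩·⟨j,b⟩ = ⟨i⊔j, p_{i,i⊔j}(a) · p_{j,i⊔j}(b)⟩` and inversion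
`⟨i,a⟩⁻¹ = ⟨i,a⁻¹⟩` (a Clifford semigroup). -/

variable {I : Type*} [SemilatticeSup I] {G : I → Type*} [∀ i, Group (G i)]

/-- Multiplication of the Płonka sum. -/
def pmul (p : ∀ i j : I, i ≤ j → (G i →* G j)) (x y : Σ i, G i) : Σ i, G i :=
  ⟨x.1 ⊔ y.1, p x.1 (x.1 ⊔ y.1) le_sup_left x.2 * p y.1 (x.1 ⊔ y.1) le_sup_right y.2⟩

/-- Inversion of the Płonka sum. -/
def pinv (x : Σ i, G i) : Σ i, G i := ⟨x.1, x.2⁻¹⟩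

/-- `θ` is a congruence on the Płonka sum: an equivalence relation compatible with
multiplication and inversion. -/
def IsCong (p : ∀ i j : I, i ≤ j → (G i →* G j))
    (θ : (Σ i, G i) → (Σ i, G i) → Prop) : Prop :=
  Equivalence θ ∧
    (∀ x x' y y', θ x x' → θ y y' → θ (pmul p x y) (pmul p x' y')) ∧
    (∀ x x', θ x x' → θ (pinv x) (pinv x'))

/-- `S_θ`: the pairs of indices related by `θ`. -/
def Srel (θ : (Σ i, G i) → (Σ i, G i) → Prop) (i j : I) : Prop :=
  ∃ (a : G i) (b : G j), θ ⟨i, a⟩ ⟨j, b⟩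

/-- `C_θ`. -/
def Crel (θ : (Σ i, G i) → (Σ i, G i) → Prop) (i j : I) : Prop :=
  Srel θ i (i ⊔ j) ∧ Srel θ j (i ⊔ j)

/-- A semilattice congruence on `I`: an equivalence relation compatible with `⊔`. -/
def IsSemilatticeCong {I : Type*} [SemilatticeSup I] (C : I → I → Prop) : Prop :=
  Equivalence C ∧ ∀ i₁ j₁ i₂ j₂, C i₁ j₁ → C i₂ j₂ → C (i₁ ⊔ i₂) (j₁ ⊔ j₂)

/-! A congruence relates `⟨i, a⟩` and `⟨j, b⟩` exactly when it relates the idempotents `⟨i, 1⟩`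
and `⟨j, 1⟩`, i.e. `(i, j) ∈ S_θ`, and relates the images of `a` and `b` in the pure fiber at
`i ⊔ j`: multiplying `θ ⟨i, 1⟩ ⟨j, 1⟩` by `⟨i, a⟩` moves `⟨i, a⟩` to `⟨i ⊔ j, p a⟩` within its class,
and `x · x⁻¹` is the idempotent in the fiber of `x`. -/

section PlonkaSum

variable {p : ∀ i j : I, i ≤ j → (G i →* G j)}

lemma sigma_mk_map_of_eq (hid : ∀ (i : I) (h : i ≤ i) (a : G i), p i i h a = a)
    {i k : I} (hk : k = i) (h : i ≤ k) (a : G i) : (⟨k, p i k h a⟩ : Σ i, G i) = ⟨i, a⟩ := by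
  subst hk
  rw [hid]

lemma pmul_one_right (i j : I) (a : G i) :
    pmul p ⟨i, a⟩ ⟨j, 1⟩ = ⟨i ⊔ j, p i (i ⊔ j) le_sup_left a⟩ := by
  simp only [pmul, map_one, mul_one]

lemma pmul_one_left (i j : I) (b : G j) :
    pmul p ⟨i, 1⟩ ⟨j, b⟩ = ⟨i ⊔ j, p j (i ⊔ j) le_sup_right b⟩ := by
  simp only [pmul, map_one, one_mul]

lemma pmul_one_right_self (hid : ∀ (i : I) (h : i ≤ i) (a : G i), p i i h a = a)
    (i : I) (a : G i) : pmul p ⟨i, a⟩ ⟨i, 1⟩ = ⟨i, a⟩ := by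
  rw [pmul_one_right, sigma_mk_map_of_eq hid (sup_idem i)]

lemma pmul_one_left_self (hid : ∀ (i : I) (h : i ≤ i) (a : G i), p i i h a = a)
    (i : I) (a : G i) : pmul p ⟨i, 1⟩ ⟨i, a⟩ = ⟨i, a⟩ := by
  rw [pmul_one_left, sigma_mk_map_of_eq hid (sup_idem i)]

lemma pmul_pinv_self (i : I) (a : G i) : pmul p ⟨i, a⟩ (pinv ⟨i, a⟩) = ⟨i, 1⟩ := by
  show (⟨i ⊔ i, p i (i ⊔ i) le_sup_left a * p i (i ⊔ i) le_sup_right a⁻¹⟩ : Σ i, G i) = _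
  rw [map_inv, mul_inv_cancel, sup_idem]

namespace IsCong

variable {θ : (Σ i, G i) → (Σ i, G i) → Prop}

lemma rel_one_of_rel (hθ : IsCong p θ) {i j : I} {a : G i} {b : G j}
    (h : θ ⟨i, a⟩ ⟨j, b⟩) : θ ⟨i, 1⟩ ⟨j, 1⟩ := by
  have := hθ.2.1 _ _ _ _ h (hθ.2.2 _ _ h)
  rwa [pmul_pinv_self, pmul_pinv_self] at this

lemma srel_iff_rel_one (hθ : IsCong p θ) (i j : I) : Srel θ i j ↔ θ ⟨i, 1⟩ ⟨j, 1⟩ :=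
  ⟨fun ⟨_, _, h⟩ => hθ.rel_one_of_rel h, fun h => ⟨1, 1, h⟩⟩

lemma rel_map_sup_left (hid : ∀ (i : I) (h : i ≤ i) (a : G i), p i i h a = a)
    (hθ : IsCong p θ) {i j : I} (h : θ ⟨i, 1⟩ ⟨j, 1⟩) (a : G i) :
    θ ⟨i, a⟩ ⟨i ⊔ j, p i (i ⊔ j) le_sup_left a⟩ := by
  have := hθ.2.1 _ _ _ _ (hθ.1.refl ⟨i, a⟩) h
  rwa [pmul_one_right_self hid, pmul_one_right] at this

lemma rel_map_sup_right (hid : ∀ (i : I) (h : i ≤ i) (a : G i), p i i h a = a)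
    (hθ : IsCong p θ) {i j : I} (h : θ ⟨i, 1⟩ ⟨j, 1⟩) (b : G j) :
    θ ⟨j, b⟩ ⟨i ⊔ j, p j (i ⊔ j) le_sup_right b⟩ := by
  have := hθ.2.1 _ _ _ _ h (hθ.1.refl ⟨j, b⟩)
  rw [pmul_one_left, pmul_one_left_self hid] at this
  exact hθ.1.symm this

theorem rel_mk_iff (hid : ∀ (i : I) (h : i ≤ i) (a : G i), p i i h a = a)
    (hθ : IsCong p θ) {i j : I} (a : G i) (b : G j) :
    θ ⟨i, a⟩ ⟨j, b⟩ ↔ Srel θ i j ∧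
      θ ⟨i ⊔ j, p i (i ⊔ j) le_sup_left a⟩ ⟨i ⊔ j, p j (i ⊔ j) le_sup_right b⟩ := by
  rw [hθ.srel_iff_rel_one]
  refine ⟨fun h => ?_, fun ⟨hone, hsup⟩ => ?_⟩
  · have hone := hθ.rel_one_of_rel h
    exact ⟨hone, hθ.1.trans (hθ.1.symm (hθ.rel_map_sup_left hid hone a))
      (hθ.1.trans h (hθ.rel_map_sup_right hid hone b))⟩
  · exact hθ.1.trans (hθ.rel_map_sup_left hid hone a)
      (hθ.1.trans hsup (hθ.1.symm (hθ.rel_map_sup_right hid hone b)))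

end IsCong

end PlonkaSum

theorem congruence_determined_by_Srel_and_pure_fibers_general
    (p : ∀ i j : I, i ≤ j → (G i →* G j))
    (hid : ∀ (i : I) (h : i ≤ i) (a : G i), p i i h a = a)
    (θ θ' : (Σ i, G i) → (Σ i, G i) → Prop)
    (hθ : IsCong p θ) (hθ' : IsCong p θ') :
    θ = θ' ↔
      ((∀ i j : I, Srel θ i j ↔ Srel θ' i j) ∧
        (∀ (i : I) (a b : G i), θ ⟨i, a⟩ ⟨i, b⟩ ↔ θ' ⟨i, a⟩ ⟨i, b⟩)) := by
  refine ⟨fun h => h ▸ ⟨fun _ _ => Iff.rfl, fun _ _ _ => Iff.rfl⟩, fun ⟨hS, hF⟩ => ?_⟩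
  funext ⟨i, a⟩ ⟨j, b⟩
  rw [hθ.rel_mk_iff hid, hθ'.rel_mk_iff hid, hS, hF]

/-- A congruence of a Płonka sum of groups is uniquely determined by its index set `S_θ`
together with its pure fibers `θ_{ii}`. -/
theorem congruence_determined_by_Srel_and_pure_fibers
    (p : ∀ i j : I, i ≤ j → (G i →* G j))
    (hid : ∀ (i : I) (h : i ≤ i) (a : G i), p i i h a = a)
    (hcomp : ∀ (i j k : I) (hij : i ≤ j) (hjk : j ≤ k) (a : G i),
      p j k hjk (p i j hij a) = p i k (hij.trans hjk) a)
    (θ θ' : (Σ i, G i) → (Σ i, G i) → Prop)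
    (hθ : IsCong p θ) (hθ' : IsCong p θ') :
    θ = θ' ↔
      ((∀ i j : I, Srel θ i j ↔ Srel θ' i j) ∧
        (∀ (i : I) (a b : G i), θ ⟨i, a⟩ ⟨i, b⟩ ↔ θ' ⟨i, a⟩ ⟨i, b⟩)) :=
  congruence_determined_by_Srel_and_pure_fibers_general p hid θ θ' hθ hθ'
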